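/- Let (T, f) be a depth-decomposition of a vector matroid M = (X, I) such that T is not a rooted path and each primary branch of T is at capacity. Let S_1, ..., S_k be the primary branches of T, let A_1, ..., A_k be the linear hulls of Ŝ_1, ..., Ŝ_k respectively, and let h be the depth of the common root of S_1, ..., S_k in T. Then for all distinct indices i and j, dim(A_i ∩ A_j) = h and A_i ∩ A_j = A_i ∩ span(∪_{j' ≠ i} A_{j'}). -/

import Mathlib

/-! Infrastructure: rooted trees, depth-decompositions and branch-depth of matroids,
following the definitions of Kardoš, Král', Liebenau, Mach and of the paper
"Optimal matrix tree-depth and a row-invariant parameterized algorithm for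
integer programming". -/

/-- A rooted tree on a (nonempty) finite vertex type `V`, given by its root and its
parent function: the parent of the root is the root itself, and from any vertex the
root is reached by iterating the parent function. -/
structure RTree (V : Type) [Fintype V] [DecidableEq V] where
  root : V
  parent : V → V
  parent_root : parent root = root
  reach : ∀ v : V, ∃ n : ℕ, parent^[n] v = root

namespace RTree

variable {V : Type} [Fintype V] [DecidableEq V]

/-- A vertex is a leaf if it has no children. -/
def IsLeaf (T : RTree V) (v : V) : Prop :=
  ∀ u : V, T.parent u = v → u = v

/-- The non-root vertices on the path from `v` to the root of `T`; they are in bijective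
correspondence with the edges of this path (each such vertex corresponds to the edge
joining it to its parent). -/
def pathEdges (T : RTree V) (v : V) : Set V :=
  {u | u ≠ T.root ∧ ∃ n : ℕ, T.parent^[n] v = u}

/-- The number of edges of the tree. -/
def edgeCount (T : RTree V) : ℕ := Fintype.card V - 1

/-- The depth of a vertex: the number of edges on the path from the root to it. -/
noncomputable def depthV (T : RTree V) (v : V) : ℕ :=
  sInf {n : ℕ | T.parent^[n] v = T.root}

/-- The depth of the tree: the maximum number of edges on a path from the root to a leaf. -/
noncomputable def depth (T : RTree V) : ℕ :=
  Finset.univ.sup T.depthV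

/-- The descendants of a vertex `u` (including `u` itself). -/
def desc (T : RTree V) (u : V) : Set V := {w | ∃ n : ℕ, T.parent^[n] w = u}

/-- The number of children of a vertex. -/
noncomputable def childCount (T : RTree V) (u : V) : ℕ :=
  {w : V | T.parent w = u ∧ w ≠ u}.ncard

/-- A rooted tree is a rooted path if every vertex has at most one child. -/
def IsRootedPath (T : RTree V) : Prop := ∀ u : V, T.childCount u ≤ 1

/-- `a` is a strict ancestor of `v`. -/
def IsStrictAncestor (T : RTree V) (a v : V) : Prop :=
  a ≠ v ∧ ∃ n : ℕ, T.parent^[n] v = a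

/-- A branch of `T` consists of a vertex `u`, exactly one child `u'` of `u` and all
descendants of `u'`; it is hence determined by the non-root vertex `u'` and denoted
here by `u'`.  Its root is `parent u'`, its vertex set is `{parent u'} ∪ desc u'`, and
its edge number `‖S‖` is `(desc u').ncard`.  The branch determined by `u'` is primary
if its root has at least two children and every (strict) ancestor of its root has
exactly one child. -/
def IsPrimaryBranch (T : RTree V) (u' : V) : Prop :=
  u' ≠ T.root ∧ 2 ≤ T.childCount (T.parent u') ∧
    ∀ a : V, T.IsStrictAncestor a (T.parent u') → T.childCount a = 1

end RTree

/-- `(T, f)` is a depth-decomposition of the matroid on ground set `X` with rank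
function `rk` and rank `r`: `f` maps elements of the matroid to leaves of `T`, the
number of edges of `T` equals the rank `r` of the matroid, and the rank of every
`X' ⊆ X` is at most the number of edges contained in the union of the paths in `T`
from the root to the vertices `f x`, `x ∈ X'`. -/
def IsDepthDecompOn {X V : Type} [Fintype V] [DecidableEq V]
    (rk : Set X → ℕ) (r : ℕ) (T : RTree V) (f : X → V) : Prop :=
  (∀ x : X, T.IsLeaf (f x)) ∧ T.edgeCount = r ∧
    ∀ X' : Set X, rk X' ≤ (⋃ x ∈ X', T.pathEdges (f x)).ncard

/-- The branch-depth of the matroid on ground set `X` with rank function `rk` and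
rank `r`: the smallest depth of a rooted tree forming a depth-decomposition. -/
noncomputable def branchDepth {X : Type} (rk : Set X → ℕ) (r : ℕ) : ℕ :=
  sInf {d : ℕ | ∃ (nV : ℕ) (T : RTree (Fin (nV + 1))) (f : X → Fin (nV + 1)),
    IsDepthDecompOn rk r T f ∧ T.depth = d}

/-- The branch of `T` determined by the non-root vertex `u'` is at capacity: the rank
of the set `Ŝ` of matroid elements mapped by `f` to the leaves of the branch equals the
number `‖S‖` of edges of the branch plus the number of edges on the path from the root
of `T` to the root of the branch. -/
def AtCapacity {X V : Type} [Fintype V] [DecidableEq V]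
    (rk : Set X → ℕ) (T : RTree V) (f : X → V) (u' : V) : Prop :=
  rk {x | f x ∈ T.desc u'} = (T.desc u').ncard + T.depthV (T.parent u')

/-- The rank function of the vector matroid formed by the family of vectors `v`:
the rank of a subset is the dimension of its linear hull. -/
noncomputable def vecRk (F : Type) {W ι : Type} [Field F] [AddCommGroup W] [Module F W]
    (v : ι → W) (S : Set ι) : ℕ :=
  Module.finrank F (Submodule.span F (v '' S))

/-- `(T, f, g)` is an extended depth-decomposition of the vector matroid formed by the
family of vectors `v`: `(T, f)` is a depth-decomposition, the images under `g` of the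
non-root vertices of `T` form a basis of the linear hull of the vectors, and every
vector `v x` lies in the linear hull of the `g`-image of the non-root vertices on the
path from `f x` to the root. -/
def IsExtDepthDecomp (F : Type) {W ι V : Type} [Field F] [AddCommGroup W] [Module F W]
    [Fintype V] [DecidableEq V] (v : ι → W) (T : RTree V) (f : ι → V) (g : V → W) : Prop :=
  IsDepthDecompOn (vecRk F v) (vecRk F v Set.univ) T f ∧
  LinearIndependent F (fun u : {u : V // u ≠ T.root} => g u.val) ∧
  Submodule.span F (g '' {u : V | u ≠ T.root}) = Submodule.span F (Set.range v) ∧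
  ∀ x : ι, v x ∈ Submodule.span F (g '' T.pathEdges (f x))

/-! All primary branches hang from one vertex `b` of depth `h`, and the path from the root to
`b` and the primary branches have pairwise disjoint edge sets. Hence the hulls `A₁, A₂` of two
primary branches, each at capacity, span a space of dimension at most `‖S₁‖ + ‖S₂‖ + h` and so
meet in dimension at least `h`. On the other hand `A₁` and the sum `B` of the other hulls span
the whole space, of dimension `r ≥ h + Σ ‖Sᵢ‖`, so `A₁ ∩ B` has dimension at most `h`.
As `A₁ ∩ A₂ ≤ A₁ ∩ B`, the two intersections coincide and have dimension `h`. -/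

namespace RTree

variable {V : Type} [Fintype V] [DecidableEq V] (T : RTree V)

theorem iterate_depthV (v : V) : T.parent^[T.depthV v] v = T.root :=
  Nat.sInf_mem (T.reach v)

theorem depthV_le_of_iterate_eq_root {v : V} {n : ℕ} (h : T.parent^[n] v = T.root) :
    T.depthV v ≤ n :=
  Nat.sInf_le h

theorem iterate_eq_root_of_depthV_le {v : V} {n : ℕ} (h : T.depthV v ≤ n) :
    T.parent^[n] v = T.root := by
  obtain ⟨k, rfl⟩ := Nat.exists_eq_add_of_le' h
  rw [Function.iterate_add_apply, T.iterate_depthV, Function.iterate_fixed T.parent_root]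

theorem depthV_iterate (v : V) (n : ℕ) : T.depthV (T.parent^[n] v) = T.depthV v - n := by
  refine le_antisymm (T.depthV_le_of_iterate_eq_root ?_) ?_
  · rw [← Function.iterate_add_apply]
    exact T.iterate_eq_root_of_depthV_le (by omega)
  · have h := T.depthV_le_of_iterate_eq_root
      (by rw [Function.iterate_add_apply]; exact T.iterate_depthV (T.parent^[n] v))
    omega

theorem depthV_eq_zero_iff {v : V} : T.depthV v = 0 ↔ v = T.root :=
  ⟨fun h => by simpa [h] using T.iterate_depthV v,
    fun h => Nat.le_zero.1 (T.depthV_le_of_iterate_eq_root h)⟩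

theorem depthV_parent {v : V} (hv : v ≠ T.root) : T.depthV v = T.depthV (T.parent v) + 1 := by
  have h := T.depthV_iterate v 1
  have h0 : T.depthV v ≠ 0 := mt T.depthV_eq_zero_iff.1 hv
  rw [Function.iterate_one] at h
  omega

theorem depthV_eq_add_of_iterate_eq {u w : V} (hu : u ≠ T.root) {n : ℕ} (h : T.parent^[n] w = u) :
    T.depthV w = T.depthV u + n := by
  have hd := T.depthV_iterate w n
  have hn : n ≤ T.depthV w := by
    by_contra hlt
    exact hu (h ▸ T.iterate_eq_root_of_depthV_le (by omega))
  rw [h] at hd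
  omega

theorem le_depthV_of_mem_desc {u w : V} (hu : u ≠ T.root) (hw : w ∈ T.desc u) :
    T.depthV u ≤ T.depthV w := by
  obtain ⟨n, hn⟩ := hw
  have := T.depthV_eq_add_of_iterate_eq hu hn
  omega

theorem root_notMem_desc {u : V} (hu : u ≠ T.root) : T.root ∉ T.desc u := fun ⟨n, hn⟩ =>
  hu (hn ▸ Function.iterate_fixed T.parent_root n)

theorem mem_pathEdges_iff {v u : V} :
    u ∈ T.pathEdges v ↔ ∃ n < T.depthV v, T.parent^[n] v = u := by
  constructor
  · rintro ⟨hu, n, rfl⟩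
    exact ⟨n, not_le.1 fun hle => hu (T.iterate_eq_root_of_depthV_le hle), rfl⟩
  · rintro ⟨n, hn, rfl⟩
    exact ⟨fun h => by have := T.depthV_le_of_iterate_eq_root h; omega, n, rfl⟩

theorem ncard_pathEdges (v : V) : (T.pathEdges v).ncard = T.depthV v := by
  have himage : T.pathEdges v = (fun n => T.parent^[n] v) '' Set.Iio (T.depthV v) := by
    ext u
    simp only [mem_pathEdges_iff, Set.mem_image, Set.mem_Iio]
  have hinj : Set.InjOn (fun n => T.parent^[n] v) (Set.Iio (T.depthV v)) := by
    intro a ha b hb hab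
    have := congrArg T.depthV hab
    simp only [depthV_iterate, Set.mem_Iio] at this ha hb
    omega
  rw [himage, hinj.ncard_image, ← Finset.coe_range, Set.ncard_coe_finset,
    Finset.card_range]

theorem depthV_le_of_mem_pathEdges {v u : V} (hu : u ∈ T.pathEdges v) :
    T.depthV u ≤ T.depthV v := by
  obtain ⟨n, -, rfl⟩ := T.mem_pathEdges_iff.1 hu
  rw [depthV_iterate]
  omega

theorem pathEdges_subset_desc_union {u w : V} (hw : w ∈ T.desc u) :
    T.pathEdges w ⊆ T.desc u ∪ T.pathEdges (T.parent u) := by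
  obtain ⟨m, rfl⟩ := hw
  rintro z ⟨hz, n, rfl⟩
  rcases le_or_gt n m with hle | hlt
  · refine Or.inl ⟨m - n, ?_⟩
    rw [← Function.iterate_add_apply, Nat.sub_add_cancel hle]
  · refine Or.inr ⟨hz, n - (m + 1), ?_⟩
    rw [← Function.iterate_succ_apply, ← Function.iterate_add_apply]
    congr 1
    omega

theorem disjoint_desc_of_parent_eq {c₁ c₂ : V} (h₁ : c₁ ≠ T.root) (h₂ : c₂ ≠ T.root)
    (hpar : T.parent c₁ = T.parent c₂) (hne : c₁ ≠ c₂) : Disjoint (T.desc c₁) (T.desc c₂) := by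
  rw [Set.disjoint_left]
  rintro w ⟨n, hn⟩ ⟨m, hm⟩
  have e₁ := T.depthV_eq_add_of_iterate_eq h₁ hn
  have e₂ := T.depthV_eq_add_of_iterate_eq h₂ hm
  rw [T.depthV_parent h₁, T.depthV_parent h₂, hpar] at *
  obtain rfl : n = m := by omega
  exact hne (hn.symm.trans hm)

theorem disjoint_pathEdges_desc {c : V} (hc : c ≠ T.root) :
    Disjoint (T.pathEdges (T.parent c)) (T.desc c) := by
  rw [Set.disjoint_left]
  intro u hpath hdesc
  have h₁ := T.depthV_le_of_mem_pathEdges hpath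
  have h₂ := T.le_depthV_of_mem_desc hc hdesc
  rw [T.depthV_parent hc] at h₂
  omega

theorem depthV_add_sum_ncard_desc_le {b : V} (P : Finset V)
    (hP : ∀ c ∈ P, c ≠ T.root ∧ T.parent c = b) :
    T.depthV b + ∑ c ∈ P, (T.desc c).ncard ≤ Fintype.card V - 1 := by
  have hdesc : (P : Set V).PairwiseDisjoint T.desc := fun c₁ h₁ c₂ h₂ hne =>
    T.disjoint_desc_of_parent_eq (hP c₁ h₁).1 (hP c₂ h₂).1
      ((hP c₁ h₁).2.trans (hP c₂ h₂).2.symm) hne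
  have hunion : (⋃ c ∈ P, T.desc c).ncard = ∑ c ∈ P, (T.desc c).ncard := by
    rw [← Finset.set_biUnion_coe, P.finite_toSet.ncard_biUnion (fun _ _ => Set.toFinite _) hdesc,
      finsum_mem_coe_finset]
  have hdisj : Disjoint (T.pathEdges b) (⋃ c ∈ P, T.desc c) :=
    Set.disjoint_iUnion₂_right.2 fun c hc => (hP c hc).2 ▸ T.disjoint_pathEdges_desc (hP c hc).1
  have hsub : T.pathEdges b ∪ ⋃ c ∈ P, T.desc c ⊆ {T.root}ᶜ := by
    rintro u (⟨hu, -⟩ | hu)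
    · exact hu
    · obtain ⟨c, hc, hu⟩ := Set.mem_iUnion₂.1 hu
      exact ne_of_mem_of_not_mem hu (T.root_notMem_desc (hP c hc).1)
  calc T.depthV b + ∑ c ∈ P, (T.desc c).ncard
      = (T.pathEdges b ∪ ⋃ c ∈ P, T.desc c).ncard := by
        rw [Set.ncard_union_eq hdisj, ncard_pathEdges, hunion]
    _ ≤ ({T.root}ᶜ : Set V).ncard := Set.ncard_le_ncard hsub
    _ = Fintype.card V - 1 := by
        rw [Set.ncard_compl, Set.ncard_singleton, Nat.card_eq_fintype_card]

theorem eq_of_childCount_eq_one {a x y : V} (ha : T.childCount a = 1)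
    (hx : T.parent x = a) (hxa : x ≠ a) (hy : T.parent y = a) (hya : y ≠ a) : x = y :=
  (Set.ncard_le_one_iff (Set.toFinite _)).1 ha.le ⟨hx, hxa⟩ ⟨hy, hya⟩

theorem IsLeaf.childCount_eq_zero {l : V} (hl : T.IsLeaf l) : T.childCount l = 0 := by
  rw [childCount, Set.ncard_eq_zero (Set.toFinite _), Set.eq_empty_iff_forall_notMem]
  exact fun w ⟨hw, hwl⟩ => hwl (hl w hw)

theorem eq_iterate_of_depthV_le {b : V}
    (hb : ∀ a, T.IsStrictAncestor a b → T.childCount a = 1) {v : V}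
    (hv : T.depthV v ≤ T.depthV b) : v = T.parent^[T.depthV b - T.depthV v] b := by
  induction hd : T.depthV v generalizing v with
  | zero => rw [T.depthV_eq_zero_iff.1 hd, Nat.sub_zero, iterate_depthV]
  | succ d ih =>
    have hv₀ : v ≠ T.root := fun h => by have := T.depthV_eq_zero_iff.2 h; omega
    have hpv : T.depthV (T.parent v) = d := by have := T.depthV_parent hv₀; omega
    have hva := ih (by omega) hpv
    set a := T.parent^[T.depthV b - d] b
    set w := T.parent^[T.depthV b - (d + 1)] b
    have hwa : T.parent w = a := by
      rw [← Function.iterate_succ_apply' T.parent]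
      congr 1
      omega
    have hda : T.depthV a = d := by rw [depthV_iterate]; omega
    have hdw : T.depthV w = d + 1 := by rw [depthV_iterate]; omega
    have ha : T.childCount a = 1 := hb a ⟨fun h => by rw [h] at hda; omega, _, rfl⟩
    exact T.eq_of_childCount_eq_one ha hva (fun h => by rw [h] at hd; omega) hwa
      (fun h => by rw [h] at hdw; omega)

theorem eq_of_depthV_eq {b : V} (hb : ∀ a, T.IsStrictAncestor a b → T.childCount a = 1)
    {v : V} (hv : T.depthV v = T.depthV b) : v = b := by
  simpa [hv] using T.eq_iterate_of_depthV_le hb hv.le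

theorem exists_isPrimaryBranch_mem_desc {u l : V} (hu : T.IsPrimaryBranch u)
    (hl : T.IsLeaf l) : ∃ c, T.IsPrimaryBranch c ∧ l ∈ T.desc c := by
  obtain ⟨-, hfork, hspine⟩ := hu
  have hdepth : T.depthV (T.parent u) < T.depthV l := by
    by_contra! hle
    have hl₀ := hl.childCount_eq_zero
    rcases eq_or_ne l (T.parent u) with rfl | hne
    · omega
    · have := hspine l ⟨hne, _, (T.eq_iterate_of_depthV_le hspine hle).symm⟩
      omega
  set c := T.parent^[T.depthV l - T.depthV (T.parent u) - 1] l
  have hc : T.depthV c = T.depthV (T.parent u) + 1 := by rw [depthV_iterate]; omega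
  have hc₀ : c ≠ T.root := fun h => by have := T.depthV_eq_zero_iff.2 h; omega
  have hpar : T.parent c = T.parent u :=
    T.eq_of_depthV_eq hspine (by have := T.depthV_parent hc₀; omega)
  exact ⟨c, ⟨hc₀, hpar ▸ hfork, hpar ▸ hspine⟩, _, rfl⟩

end RTree

theorem Submodule.finrank_inf_eq_and_inf_eq_of_le {K M : Type*} [DivisionRing K] [AddCommGroup M]
    [Module K M] {A B C : Submodule K M} [FiniteDimensional K A] [FiniteDimensional K B]
    {h : ℕ} (hCB : C ≤ B)
    (hAC : Module.finrank K ↥(A ⊔ C) + h ≤ Module.finrank K A + Module.finrank K C)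
    (hAB : Module.finrank K A + Module.finrank K B ≤ Module.finrank K ↥(A ⊔ B) + h) :
    Module.finrank K ↥(A ⊓ C) = h ∧ A ⊓ C = A ⊓ B := by
  have : FiniteDimensional K C := Submodule.finiteDimensional_of_le hCB
  have hle : A ⊓ C ≤ A ⊓ B := inf_le_inf_left A hCB
  have eC := Submodule.finrank_sup_add_finrank_inf_eq A C
  have eB := Submodule.finrank_sup_add_finrank_inf_eq A B
  have hmono := Submodule.finrank_mono hle
  exact ⟨by omega, Submodule.eq_of_le_of_finrank_le hle (by omega)⟩

section DepthDecomposition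

variable {F W ι V : Type} [Field F] [AddCommGroup W] [Module F W] [Fintype V] [DecidableEq V]

variable (F) in
/-- The hull `A = span Ŝ` of the branch determined by `c`. -/
noncomputable def branchSpan (v : ι → W) (T : RTree V)
    (f : ι → V) (c : V) : Submodule F W :=
  Submodule.span F (v '' {x | f x ∈ T.desc c})

variable {v : ι → W} {T : RTree V} {f : ι → V}

instance [Fintype ι] (c : V) : FiniteDimensional F (branchSpan F v T f c) :=
  FiniteDimensional.span_of_finite F (Set.toFinite _)

theorem iSup_branchSpan (P : Finset V) :
    ⨆ c ∈ P, branchSpan F v T f c = Submodule.span F (v '' {x | ∃ c ∈ P, f x ∈ T.desc c}) := by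
  simp only [branchSpan, ← Submodule.span_iUnion₂, ← Set.image_iUnion₂]
  congr 2
  ext x
  simp

theorem finrank_span_le_ncard_of_isDepthDecompOn {r : ℕ}
    (hdd : IsDepthDecompOn (vecRk F v) r T f) {X : Set ι} {U : Set V}
    (hU : ∀ x ∈ X, T.pathEdges (f x) ⊆ U) :
    Module.finrank F (Submodule.span F (v '' X)) ≤ U.ncard :=
  (hdd.2.2 X).trans (Set.ncard_le_ncard (Set.iUnion₂_subset hU))

theorem finrank_iSup_branchSpan_le {r : ℕ} (hdd : IsDepthDecompOn (vecRk F v) r T f)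
    {b : V} (P : Finset V) (hP : ∀ c ∈ P, T.parent c = b) :
    Module.finrank F ↥(⨆ c ∈ P, branchSpan F v T f c) ≤
      ∑ c ∈ P, (T.desc c).ncard + T.depthV b := by
  rw [iSup_branchSpan]
  calc _ ≤ (T.pathEdges b ∪ ⋃ c ∈ P, T.desc c).ncard := by
        refine finrank_span_le_ncard_of_isDepthDecompOn hdd fun x ⟨c, hc, hx⟩ => ?_
        refine (T.pathEdges_subset_desc_union hx).trans ?_
        rw [hP c hc, Set.union_comm]
        exact Set.union_subset_union_right _ (Set.subset_biUnion_of_mem (u := T.desc) hc)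
    _ ≤ (T.pathEdges b).ncard + (⋃ c ∈ P, T.desc c).ncard := Set.ncard_union_le _ _
    _ ≤ T.depthV b + ∑ c ∈ P, (T.desc c).ncard := by
        rw [T.ncard_pathEdges]
        exact Nat.add_le_add_left (P.set_ncard_biUnion_le _) _
    _ = ∑ c ∈ P, (T.desc c).ncard + T.depthV b := Nat.add_comm _ _

theorem finrank_branchSpan_sup_le {r : ℕ} (hdd : IsDepthDecompOn (vecRk F v) r T f)
    {c₁ c₂ : V} (hpar : T.parent c₁ = T.parent c₂) (hne : c₁ ≠ c₂) :
    Module.finrank F ↥(branchSpan F v T f c₁ ⊔ branchSpan F v T f c₂) ≤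
      (T.desc c₁).ncard + (T.desc c₂).ncard + T.depthV (T.parent c₁) := by
  have := finrank_iSup_branchSpan_le hdd {c₁, c₂} (b := T.parent c₁) (by simp [hpar])
  rwa [Finset.sum_pair hne, Finset.iSup_insert, Finset.iSup_singleton] at this

theorem finrank_iSup_branchSpan_isPrimaryBranch
    (hdd : IsDepthDecompOn (vecRk F v) (vecRk F v Set.univ) T f) {P : Finset V}
    (hP : ∀ c, c ∈ P ↔ T.IsPrimaryBranch c) {u : V} (hu : T.IsPrimaryBranch u) :
    Module.finrank F ↥(⨆ c ∈ P, branchSpan F v T f c) = Fintype.card V - 1 := by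
  have hcover : {x | ∃ c ∈ P, f x ∈ T.desc c} = Set.univ :=
    Set.eq_univ_of_forall fun x => by
      simpa [hP] using T.exists_isPrimaryBranch_mem_desc hu (hdd.1 x)
  rw [iSup_branchSpan, hcover]
  exact hdd.2.1.symm

end DepthDecomposition

theorem inter_dim_eq_and_inter_eq_general (F W ι : Type) [Field F] [AddCommGroup W]
    [Module F W] [Fintype ι] (v : ι → W) {V : Type} [Fintype V] [DecidableEq V]
    (T : RTree V) (f : ι → V)
    (hdd : IsDepthDecompOn (vecRk F v) (vecRk F v Set.univ) T f)
    (hcap : ∀ u' : V, T.IsPrimaryBranch u' → AtCapacity (vecRk F v) T f u')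
    (h : ℕ) (hh : ∀ u' : V, T.IsPrimaryBranch u' → T.depthV (T.parent u') = h) :
    ∀ u₁ u₂ : V, T.IsPrimaryBranch u₁ → T.IsPrimaryBranch u₂ → u₁ ≠ u₂ →
      Module.finrank F
        ↥(Submodule.span F (v '' {x | f x ∈ T.desc u₁}) ⊓
            Submodule.span F (v '' {x | f x ∈ T.desc u₂})) = h ∧
      Submodule.span F (v '' {x | f x ∈ T.desc u₁}) ⊓
          Submodule.span F (v '' {x | f x ∈ T.desc u₂}) =
        Submodule.span F (v '' {x | f x ∈ T.desc u₁}) ⊓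
          (⨆ u' ∈ {u' : V | T.IsPrimaryBranch u' ∧ u' ≠ u₁},
            Submodule.span F (v '' {x | f x ∈ T.desc u'})) := by
  classical
  intro u₁ u₂ hp₁ hp₂ hne
  set P := Finset.univ.filter T.IsPrimaryBranch
  set Q := P.erase u₁
  have hmem : ∀ c, c ∈ P ↔ T.IsPrimaryBranch c := by simp [P]
  have hPQ : insert u₁ Q = P := Finset.insert_erase ((hmem _).2 hp₁)
  have hpar : ∀ c ∈ P, T.parent c = T.parent u₁ := fun c hc =>
    T.eq_of_depthV_eq hp₁.2.2 ((hh c ((hmem c).1 hc)).trans (hh u₁ hp₁).symm)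
  have hdim : ∀ c, T.IsPrimaryBranch c →
      Module.finrank F (branchSpan F v T f c) = (T.desc c).ncard + h :=
    fun c hc => (hcap c hc).trans (by rw [hh c hc])
  have hdim₁ := hdim u₁ hp₁
  have hdim₂ := hdim u₂ hp₂
  have hdim₁₂ := finrank_branchSpan_sup_le hdd (hpar u₂ ((hmem _).2 hp₂)).symm hne
  have hdimB := finrank_iSup_branchSpan_le hdd Q fun c hc => hpar c (Finset.mem_of_mem_erase hc)
  have hcount := T.depthV_add_sum_ncard_desc_le P fun c hc => ⟨((hmem c).1 hc).1, hpar c hc⟩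
  have htop := finrank_iSup_branchSpan_isPrimaryBranch hdd hmem hp₁
  rw [← hPQ, Finset.sum_insert (show u₁ ∉ Q from Finset.notMem_erase u₁ P)] at hcount
  rw [← hPQ, Finset.iSup_insert] at htop
  rw [hh u₁ hp₁] at hdim₁₂ hdimB hcount
  have hle : branchSpan F v T f u₂ ≤ ⨆ c ∈ Q, branchSpan F v T f c :=
    le_biSup (branchSpan F v T f) (Finset.mem_erase.2 ⟨hne.symm, (hmem _).2 hp₂⟩)
  have key := Submodule.finrank_inf_eq_and_inf_eq_of_le (A := branchSpan F v T f u₁) (h := h) hle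
    (by omega) (by omega)
  have hB : ⨆ c ∈ Q, branchSpan F v T f c =
      ⨆ u' ∈ {u' : V | T.IsPrimaryBranch u' ∧ u' ≠ u₁}, branchSpan F v T f u' := by
    simp [Q, P, and_comm]
  rwa [hB] at key

/-- the two key equalities in the proof of the intersection lemma.
Let `(T, f)` be a depth-decomposition of a vector matroid such that `T` is not a rooted
path and each primary branch of `T` is at capacity, and let `h` be the depth of the
common root of the primary branches.  Then for all distinct primary branches `u₁ ≠ u₂`,
the intersection of the linear hulls `A₁ = span Ŝ₁` and `A₂ = span Ŝ₂` has dimension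
`h`, and `A₁ ⊓ A₂ = A₁ ⊓ span (⋃ of the hulls of the other primary branches)`. -/
theorem inter_dim_eq_and_inter_eq (F W ι : Type) [Field F] [AddCommGroup W]
    [Module F W] [Fintype ι] (v : ι → W) {V : Type} [Fintype V] [DecidableEq V]
    (T : RTree V) (f : ι → V)
    (hdd : IsDepthDecompOn (vecRk F v) (vecRk F v Set.univ) T f)
    (hnp : ¬ T.IsRootedPath)
    (hcap : ∀ u' : V, T.IsPrimaryBranch u' → AtCapacity (vecRk F v) T f u')
    (h : ℕ) (hh : ∀ u' : V, T.IsPrimaryBranch u' → T.depthV (T.parent u') = h) :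
    ∀ u₁ u₂ : V, T.IsPrimaryBranch u₁ → T.IsPrimaryBranch u₂ → u₁ ≠ u₂ →
      Module.finrank F
        ↥(Submodule.span F (v '' {x | f x ∈ T.desc u₁}) ⊓
            Submodule.span F (v '' {x | f x ∈ T.desc u₂})) = h ∧
      Submodule.span F (v '' {x | f x ∈ T.desc u₁}) ⊓
          Submodule.span F (v '' {x | f x ∈ T.desc u₂}) =
        Submodule.span F (v '' {x | f x ∈ T.desc u₁}) ⊓
          (⨆ u' ∈ {u' : V | T.IsPrimaryBranch u' ∧ u' ≠ u₁},
            Submodule.span F (v '' {x | f x ∈ T.desc u'})) :=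
  inter_dim_eq_and_inter_eq_general F W ι v T f hdd hcap h hh
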